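/- In the algebra A = U(g) ⊗_ℂ C(p), the following three commutator identities hold: (i) D·(1 ⊗ e3·f4) − (1 ⊗ e3·f4)·D = −2·(E3 ⊗ f4 − F4 ⊗ e3); (ii) D·(1 ⊗ e4·f3) − (1 ⊗ e4·f3)·D = −2·(E4 ⊗ f3 − F3 ⊗ e4); (iii) D·(1 ⊗ (e3·f3 − e4·f4)) − (1 ⊗ (e3·f3 − e4·f4))·D = −2·D + 4·(E4 ⊗ f4 + F3 ⊗ e3). -/

import Mathlib

noncomputable section

open Matrix Complex

attribute [local instance 100] LieRing.ofAssociativeRing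

/-- The space of 5×5 complex matrices. -/
abbrev M5 := Matrix (Fin 5) (Fin 5) ℂ

/-- `e i j` : the matrix with `(i,j)` entry `1` and all other entries `0` (the 1-based indices
`e_{ij}` of the paper become 0-based here, so e.g. `e12` is `e 0 1`). -/
def e (i j : Fin 5) : M5 := Matrix.single i j 1

def H1 : M5 := I • e 0 1 - I • e 1 0
def H2 : M5 := I • e 2 3 - I • e 3 2
def E1 : M5 := (1/2 : ℂ) • (e 0 2 - e 1 3 - I • e 1 2 - I • e 0 3 - e 2 0 + e 3 1 + I • e 2 1 + I • e 3 0)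
def E2 : M5 := (1/2 : ℂ) • (e 0 2 + e 1 3 - I • e 1 2 + I • e 0 3 - e 2 0 - e 3 1 + I • e 2 1 - I • e 3 0)
def F1 : M5 := (-1/2 : ℂ) • (e 0 2 - e 1 3 + I • e 1 2 + I • e 0 3 - e 2 0 + e 3 1 - I • e 2 1 - I • e 3 0)
def F2 : M5 := (-1/2 : ℂ) • (e 0 2 + e 1 3 + I • e 1 2 - I • e 0 3 - e 2 0 - e 3 1 - I • e 2 1 + I • e 3 0)
def E3 : M5 := e 0 4 - I • e 1 4 + e 4 0 - I • e 4 1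
def E4 : M5 := e 2 4 - I • e 3 4 + e 4 2 - I • e 4 3
def F3 : M5 := e 0 4 + I • e 1 4 + e 4 0 + I • e 4 1
def F4 : M5 := e 2 4 + I • e 3 4 + e 4 2 + I • e 4 3
/-- The matrix `J = diag(1,1,1,1,−1)`. -/
def Jmat : M5 := Matrix.diagonal ![1, 1, 1, 1, -1]

/-- The complexification `g` of `so(4,1)`, realized as the Lie algebra of all `X ∈ M₅(ℂ)`
with `Xᵀ * J + J * X = 0`, a Lie subalgebra of `M₅(ℂ)` with the commutator bracket. -/
def gLie : LieSubalgebra ℂ M5 where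
  carrier := {X | Xᵀ * Jmat + Jmat * X = 0}
  add_mem' := by
    intro X Y hX hY
    simp only [Set.mem_setOf_eq] at *
    rw [Matrix.transpose_add, Matrix.add_mul, Matrix.mul_add]
    calc Xᵀ * Jmat + Yᵀ * Jmat + (Jmat * X + Jmat * Y)
        = Xᵀ * Jmat + Jmat * X + (Yᵀ * Jmat + Jmat * Y) := by abel
      _ = 0 := by rw [hX, hY, add_zero]
  zero_mem' := by simp
  smul_mem' := by
    intro c X hX
    simp only [Set.mem_setOf_eq] at *
    rw [Matrix.transpose_smul, Matrix.smul_mul, Matrix.mul_smul, ← smul_add, hX, smul_zero]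
  lie_mem' := by
    intro X Y hX hY
    simp only [Set.mem_setOf_eq] at *
    have hX' : Xᵀ * Jmat = -(Jmat * X) := eq_neg_of_add_eq_zero_left hX
    have hY' : Yᵀ * Jmat = -(Jmat * Y) := eq_neg_of_add_eq_zero_left hY
    have h : (⁅X, Y⁆)ᵀ * Jmat = -(Jmat * ⁅X, Y⁆) := by
      rw [Ring.lie_def, Matrix.transpose_sub, Matrix.transpose_mul, Matrix.transpose_mul,
        Matrix.sub_mul, Matrix.mul_assoc Yᵀ, Matrix.mul_assoc Xᵀ, hX', hY',
        Matrix.mul_neg, Matrix.mul_neg, ← Matrix.mul_assoc, ← Matrix.mul_assoc, hX', hY',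
        Matrix.neg_mul, Matrix.neg_mul, neg_neg, neg_neg, Matrix.mul_sub, neg_sub,
        Matrix.mul_assoc, Matrix.mul_assoc]
    show (⁅X, Y⁆)ᵀ * Jmat + Jmat * ⁅X, Y⁆ = 0
    rw [h, neg_add_cancel]

theorem mem_gLie_iff (X : M5) :
    X ∈ gLie ↔ ∀ i j, X j i * ![1, 1, 1, 1, -1] j + ![1, 1, 1, 1, -1] i * X i j = 0 := by
  constructor
  · intro h i j
    have h' : Xᵀ * Jmat + Jmat * X = 0 := h
    have := congrFun (congrFun h' i) j
    simpa [Jmat, Matrix.mul_diagonal, Matrix.diagonal_mul] using this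
  · intro h
    show Xᵀ * Jmat + Jmat * X = 0
    ext i j
    simpa [Jmat, Matrix.mul_diagonal, Matrix.diagonal_mul] using h i j

set_option maxHeartbeats 1000000 in
theorem E3_mem : E3 ∈ gLie := by
  rw [mem_gLie_iff]
  intro i j
  fin_cases i <;> fin_cases j <;>
    simp [E3, e, Matrix.single, Matrix.smul_apply, Matrix.sub_apply, Matrix.add_apply]

set_option maxHeartbeats 1000000 in
theorem E4_mem : E4 ∈ gLie := by
  rw [mem_gLie_iff]
  intro i j
  fin_cases i <;> fin_cases j <;>
    simp [E4, e, Matrix.single, Matrix.smul_apply, Matrix.sub_apply, Matrix.add_apply]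

set_option maxHeartbeats 1000000 in
theorem F3_mem : F3 ∈ gLie := by
  rw [mem_gLie_iff]
  intro i j
  fin_cases i <;> fin_cases j <;>
    simp [F3, e, Matrix.single, Matrix.smul_apply, Matrix.sub_apply, Matrix.add_apply]

set_option maxHeartbeats 1000000 in
theorem F4_mem : F4 ∈ gLie := by
  rw [mem_gLie_iff]
  intro i j
  fin_cases i <;> fin_cases j <;>
    simp [F4, e, Matrix.single, Matrix.smul_apply, Matrix.sub_apply, Matrix.add_apply]

/-- The universal enveloping algebra `U(g)`. -/
abbrev Ug := UniversalEnvelopingAlgebra ℂ gLie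

/-- The image of `E3` in `U(g)`. -/
def uE3 : Ug := UniversalEnvelopingAlgebra.ι ℂ (⟨E3, E3_mem⟩ : gLie)

/-- The image of `E4` in `U(g)`. -/
def uE4 : Ug := UniversalEnvelopingAlgebra.ι ℂ (⟨E4, E4_mem⟩ : gLie)

/-- The image of `F3` in `U(g)`. -/
def uF3 : Ug := UniversalEnvelopingAlgebra.ι ℂ (⟨F3, F3_mem⟩ : gLie)

/-- The image of `F4` in `U(g)`. -/
def uF4 : Ug := UniversalEnvelopingAlgebra.ι ℂ (⟨F4, F4_mem⟩ : gLie)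


/-- A 4-dimensional complex vector space with basis `(e3, e4, f3, f4)` (modelled on `Fin 4 → ℂ`,
with `e3, e4, f3, f4` the standard basis vectors, in this order). -/
abbrev Vp := Fin 4 → ℂ

def pe3 : Vp := Pi.single 0 1
def pe4 : Vp := Pi.single 1 1
def pf3 : Vp := Pi.single 2 1
def pf4 : Vp := Pi.single 3 1

/-- The symmetric bilinear form `B` on `p` with `B(e3,f3) = B(f3,e3) = B(e4,f4) = B(f4,e4) = 1`
and `B = 0` on all other pairs of basis vectors. -/
def Bform : LinearMap.BilinForm ℂ Vp :=
  LinearMap.mk₂ ℂ (fun v w => v 0 * w 2 + v 2 * w 0 + v 1 * w 3 + v 3 * w 1)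
    (by intros; simp only [Pi.add_apply]; ring)
    (by intros; simp only [Pi.smul_apply, smul_eq_mul]; ring)
    (by intros; simp only [Pi.add_apply]; ring)
    (by intros; simp only [Pi.smul_apply, smul_eq_mul]; ring)

/-- The quadratic form `Q(v) = −B(v,v)`. -/
def Qp : QuadraticForm ℂ Vp := LinearMap.BilinMap.toQuadraticMap (-Bform)

/-- The Clifford algebra `C(p)` of the quadratic form `Q`, in which
`v * w + w * v = −2·B(v,w)` for all `v, w ∈ p`. -/
abbrev Cp := CliffordAlgebra Qp

def ce3 : Cp := CliffordAlgebra.ι Qp pe3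
def ce4 : Cp := CliffordAlgebra.ι Qp pe4
def cf3 : Cp := CliffordAlgebra.ι Qp pf3
def cf4 : Cp := CliffordAlgebra.ι Qp pf4
open scoped TensorProduct

set_option synthInstance.maxHeartbeats 400000
set_option maxHeartbeats 1000000

/-- The algebra `A = U(g) ⊗ C(p)`. -/
abbrev Atens := Ug ⊗[ℂ] Cp

/-- The Dirac operator `D = E3⊗f3 + E4⊗f4 + F3⊗e3 + F4⊗e4 ∈ U(g) ⊗ C(p)`. -/
def Dop : Atens := uE3 ⊗ₜ[ℂ] cf3 + uE4 ⊗ₜ[ℂ] cf4 + uF3 ⊗ₜ[ℂ] ce3 + uF4 ⊗ₜ[ℂ] ce4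

/-! Commuting with `1 ⊗ c` only touches the Clifford factor, so `[D, 1 ⊗ c] = Σ X ⊗ [y, c]`
over the terms `X ⊗ y` of `D`. In a Clifford algebra `v w + w v = polar Q v w`, whence
`[v, w u] = polar Q v w • u - polar Q v u • w`; here `polar Q v w = -2 B(v, w)`, and `B` pairs
`e_i` only with `f_i`, so each bracket `[y, c]` is a multiple of a single generator. -/

theorem Algebra.TensorProduct.lie_tmul_one_tmul {R A B : Type*} [CommRing R] [Ring A]
    [Algebra R A] [Ring B] [Algebra R B] (a : A) (b c : B) :
    ⁅a ⊗ₜ[R] b, (1 : A) ⊗ₜ[R] c⁆ = a ⊗ₜ[R] ⁅b, c⁆ := by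
  simp only [Ring.lie_def, Algebra.TensorProduct.tmul_mul_tmul, mul_one, one_mul,
    TensorProduct.tmul_sub]

theorem CliffordAlgebra.lie_ι_ι_mul_ι {R M : Type*} [CommRing R] [AddCommGroup M] [Module R M]
    (Q : QuadraticForm R M) (v w u : M) :
    ⁅ι Q v, ι Q w * ι Q u⁆
      = QuadraticMap.polar Q v w • ι Q u - QuadraticMap.polar Q v u • ι Q w := by
  rw [Ring.lie_def, Algebra.smul_def, Algebra.smul_def, Algebra.commutes (QuadraticMap.polar Q v u),
    ← ι_mul_ι_add_swap, ← ι_mul_ι_add_swap]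
  noncomm_ring

theorem polar_Qp (v w : Vp) : QuadraticMap.polar Qp v w = -2 * Bform v w := by
  rw [Qp, LinearMap.BilinMap.polar_toQuadraticMap]
  simp only [LinearMap.neg_apply, Bform, LinearMap.mk₂_apply]
  ring

theorem lie_Dop_one_tmul (c : Cp) :
    ⁅Dop, (1 : Ug) ⊗ₜ[ℂ] c⁆
      = uE3 ⊗ₜ ⁅cf3, c⁆ + uE4 ⊗ₜ ⁅cf4, c⁆ + uF3 ⊗ₜ ⁅ce3, c⁆ + uF4 ⊗ₜ ⁅ce4, c⁆ := by
  simp only [Dop, add_lie, Algebra.TensorProduct.lie_tmul_one_tmul]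

/-- In `A = U(g) ⊗ C(p)`:
(i) `D·(1 ⊗ e3f4) − (1 ⊗ e3f4)·D = −2(E3 ⊗ f4 − F4 ⊗ e3)`;
(ii) `D·(1 ⊗ e4f3) − (1 ⊗ e4f3)·D = −2(E4 ⊗ f3 − F3 ⊗ e4)`;
(iii) `D·(1 ⊗ (e3f3 − e4f4)) − (1 ⊗ (e3f3 − e4f4))·D = −2D + 4(E4 ⊗ f4 + F3 ⊗ e3)`. -/
theorem stmt_4 :
    (Dop * ((1 : Ug) ⊗ₜ[ℂ] (ce3 * cf4)) - ((1 : Ug) ⊗ₜ[ℂ] (ce3 * cf4)) * Dop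
        = (-2 : ℂ) • (uE3 ⊗ₜ[ℂ] cf4 - uF4 ⊗ₜ[ℂ] ce3)) ∧
    (Dop * ((1 : Ug) ⊗ₜ[ℂ] (ce4 * cf3)) - ((1 : Ug) ⊗ₜ[ℂ] (ce4 * cf3)) * Dop
        = (-2 : ℂ) • (uE4 ⊗ₜ[ℂ] cf3 - uF3 ⊗ₜ[ℂ] ce4)) ∧
    (Dop * ((1 : Ug) ⊗ₜ[ℂ] (ce3 * cf3 - ce4 * cf4))
        - ((1 : Ug) ⊗ₜ[ℂ] (ce3 * cf3 - ce4 * cf4)) * Dop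
        = (-2 : ℂ) • Dop + (4 : ℂ) • (uE4 ⊗ₜ[ℂ] cf4 + uF3 ⊗ₜ[ℂ] ce3)) := by
  simp only [← Ring.lie_def, lie_Dop_one_tmul]
  simp only [Dop, lie_sub, ce3, ce4, cf3, cf4, CliffordAlgebra.lie_ι_ι_mul_ι, polar_Qp, Bform,
    LinearMap.mk₂_apply, pe3, pe4, pf3, pf4, Pi.single_apply, Fin.reduceEq, if_true, if_false,
    TensorProduct.tmul_sub, TensorProduct.tmul_smul]
  refine ⟨?_, ?_, ?_⟩ <;> module
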